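/- arXiv:2506.06940 — 5 statements merged into one kernel-verified Lean document; each statement's English description precedes it below -/
import Mathlib

section
/- Consider the two-layer minimalist model trained on a dataset (X, y) with dataset difficulty Q > 0. Let θ* = (u*, v₁*) be any global minimizer of L with L(θ*) = 0. Then v₁* ≠ 0, (v₁*)² = (√(C(θ*)² + 4Q) − C(θ*))/2, and the sharpness satisfies (1/N)·[σ₁²(v₁*)² + d₁²/(v₁*)²] ≤ S(θ*) ≤ (1/N)·[σ₁²(v₁*)² + (Σ_{i=1}^r d_i²)/(v₁*)²]. -/
/-!
At a zero-loss point the residuals vanish, so the Hessian of `L` reduces to its Gauss–Newton part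
`ξ ↦ (1/N) ‖X ξ_u v₁ + X u ξ_v‖²`. Expanding `X` in its singular vectors and using `σ_i o_i v₁ = d_i`
turns this into `(1/N) ∑_i (σ_i ⟨w_i, ξ_u⟩ v₁ + (d_i / v₁) ξ_v)²`. On the unit sphere, Bessel's
inequality and Cauchy–Schwarz bound it by `(1/N) (σ₁² v₁² + ∑ d_i² / v₁²)`, while the unit vector
proportional to `(σ₁ v₁ w₁, d₁ / v₁)` already makes the first summand `(1/N) (σ₁² v₁² + d₁² / v₁²)`.
Finally `Q = v₁² ∑ o_i² = v₁² (v₁² + C)`, so `v₁²` is the positive root of `t² + C t - Q`.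
-/

open scoped BigOperators

/-- Sharpness `S(θ) = λ_max(∇²L(θ))`: the largest eigenvalue of the Hessian of `L` at `θ`,
expressed as the supremum of the Hessian quadratic form over the unit sphere. -/
noncomputable def sharpness {E : Type*} [NormedAddCommGroup E] [NormedSpace ℝ E]
    (L : E → ℝ) (θ : E) : ℝ :=
  sSup {c : ℝ | ∃ ξ : E, ‖ξ‖ = 1 ∧ fderiv ℝ (fderiv ℝ L) θ ξ ξ = c}

open Finset

theorem eq_zero_of_mul_sum_sq_eq_zero {ι : Type*} (s : Finset ι) {c : ℝ} (hc : c ≠ 0)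
    {f : ι → ℝ} (h : c * ∑ i ∈ s, f i ^ 2 = 0) {i : ι} (hi : i ∈ s) : f i = 0 := by
  rw [mul_eq_zero, or_iff_right hc, sum_eq_zero_iff_of_nonneg fun _ _ => sq_nonneg _] at h
  exact pow_eq_zero_iff two_ne_zero |>.mp (h i hi)

theorem eq_sqrt_sq_add_four_mul_sub_div_two {t s C Q : ℝ} (ht : 0 ≤ t) (hs : 0 ≤ s)
    (hQ : Q = t * s) (hC : C = s - t) : t = (√(C ^ 2 + 4 * Q) - C) / 2 := by
  rw [hQ, hC, show (s - t) ^ 2 + 4 * (t * s) = (s + t) ^ 2 by ring, Real.sqrt_sq (by positivity)]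
  ring

section Orthonormal

variable {ι κ : Type*} [DecidableEq ι] [Fintype κ] {e : ι → κ → ℝ}

theorem orthonormal_toLp_of_sum_mul_eq_ite
    (he : ∀ i j, ∑ n, e i n * e j n = if i = j then 1 else 0) :
    Orthonormal ℝ (fun i => WithLp.toLp 2 (e i) : ι → EuclideanSpace ℝ κ) := by
  rw [orthonormal_iff_ite]
  intro i j
  simpa [PiLp.inner_apply, mul_comm] using he i j

variable [Fintype ι]

theorem sum_sq_sum_mul_eq_sum_sq (he : ∀ i j, ∑ n, e i n * e j n = if i = j then 1 else 0)
    (c : ι → ℝ) : ∑ n, (∑ i, c i * e i n) ^ 2 = ∑ i, c i ^ 2 := by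
  have h := (orthonormal_toLp_of_sum_mul_eq_ite he).inner_sum c c univ
  rw [real_inner_self_eq_norm_sq, EuclideanSpace.real_norm_sq_eq] at h
  simpa [sq, mul_comm] using h

theorem sum_sq_sum_mul_le_sum_sq (he : ∀ i j, ∑ n, e i n * e j n = if i = j then 1 else 0)
    (a : κ → ℝ) : ∑ i, (∑ n, e i n * a n) ^ 2 ≤ ∑ n, a n ^ 2 := by
  have := (orthonormal_toLp_of_sum_mul_eq_ite he).sum_inner_products_le (WithLp.toLp 2 a)
    (s := univ)
  simpa [PiLp.inner_apply, EuclideanSpace.real_norm_sq_eq, mul_comm] using this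

theorem eq_zero_of_sum_mul_eq_zero (he : ∀ i j, ∑ n, e i n * e j n = if i = j then 1 else 0)
    {c : ι → ℝ} (h : ∀ n, ∑ i, c i * e i n = 0) (i : ι) : c i = 0 := by
  have hsum : ∑ i, c i ^ 2 = 0 := by simp [← sum_sq_sum_mul_eq_sum_sq he, h]
  exact pow_eq_zero_iff two_ne_zero |>.mp <|
    (sum_eq_zero_iff_of_nonneg fun i _ => sq_nonneg (c i)).mp hsum i (mem_univ i)

end Orthonormal

theorem Finset.sum_add_sq_le_add_mul_add {ι : Type*} (s : Finset ι) (p q : ι → ℝ) {a c x y : ℝ}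
    (ha : 0 ≤ a) (hc : 0 ≤ c) (hx : 0 ≤ x) (hy : 0 ≤ y)
    (hp : ∑ i ∈ s, p i ^ 2 ≤ a * x) (hq : ∑ i ∈ s, q i ^ 2 ≤ c * y) :
    ∑ i ∈ s, (p i + q i) ^ 2 ≤ (a + c) * (x + y) := by
  have hcs := sum_mul_sq_le_sq_mul_sq s p q
  have hexp : ∑ i ∈ s, (p i + q i) ^ 2
      = ∑ i ∈ s, p i ^ 2 + 2 * ∑ i ∈ s, p i * q i + ∑ i ∈ s, q i ^ 2 := by
    simp only [add_sq, sum_add_distrib, mul_sum, mul_assoc]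
  have hcross : 2 * ∑ i ∈ s, p i * q i ≤ a * y + c * x := by
    nlinarith [mul_le_mul hp hq (sum_nonneg fun i _ => sq_nonneg (q i)) (by positivity),
      sq_nonneg (a * y - c * x), mul_nonneg ha hy, mul_nonneg hc hx]
  nlinarith

section SingularCoordinates

variable {ν μ ρ : Type*} [Fintype μ] [Fintype ρ]
  {X : Matrix ν μ ℝ} {σ dc : ρ → ℝ} {e : ρ → ν → ℝ} {w : ρ → μ → ℝ}

theorem sum_mul_eq_sum_singular (hX : ∀ n m, X n m = ∑ i, σ i * e i n * w i m) (z : μ → ℝ)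
    (n : ν) : ∑ m, X n m * z m = ∑ i, σ i * (∑ m, w i m * z m) * e i n := by
  simp only [hX, sum_mul, mul_sum]
  rw [sum_comm]
  exact sum_congr rfl fun i _ => sum_congr rfl fun m _ => by ring

variable (σ dc w) in
noncomputable def singularHessianForm (v : ℝ) (ξ : EuclideanSpace ℝ (μ ⊕ Unit)) : ℝ :=
  ∑ i, (σ i * (∑ m, w i m * ξ (Sum.inl m)) * v + dc i / v * ξ (Sum.inr ())) ^ 2

theorem norm_sq_eq_sum_inl_add_inr (ξ : EuclideanSpace ℝ (μ ⊕ Unit)) :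
    ‖ξ‖ ^ 2 = ∑ m, ξ (Sum.inl m) ^ 2 + ξ (Sum.inr ()) ^ 2 := by
  simp [EuclideanSpace.real_norm_sq_eq, Fintype.sum_sum_type]

theorem exists_norm_eq_one_le_singularHessianForm {k : ρ} (hwk : ∑ m, w k m ^ 2 = 1)
    {v : ℝ} (hpos : 0 < σ k ^ 2 * v ^ 2 + dc k ^ 2 / v ^ 2) :
    ∃ ξ : EuclideanSpace ℝ (μ ⊕ Unit), ‖ξ‖ = 1 ∧
      σ k ^ 2 * v ^ 2 + dc k ^ 2 / v ^ 2 ≤ singularHessianForm σ dc w v ξ := by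
  set S := σ k ^ 2 * v ^ 2 + dc k ^ 2 / v ^ 2
  have hR : √S ^ 2 = S := Real.sq_sqrt hpos.le
  have hR0 : √S ≠ 0 := (Real.sqrt_pos.mpr hpos).ne'
  set ξ : EuclideanSpace ℝ (μ ⊕ Unit) :=
    WithLp.toLp 2 (Sum.elim (fun m => σ k * v / √S * w k m) fun _ => dc k / v / √S)
  have hαk : ∑ m, w k m * ξ (Sum.inl m) = σ k * v / √S := by
    simp only [ξ, Sum.elim_inl, mul_left_comm (w k _), ← mul_sum, ← sq, hwk, mul_one]
  refine ⟨ξ, ?_, ?_⟩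
  · rw [← pow_eq_one_iff_of_nonneg (norm_nonneg ξ) two_ne_zero, norm_sq_eq_sum_inl_add_inr]
    simp only [ξ, Sum.elim_inl, Sum.elim_inr, mul_pow, ← mul_sum, hwk, mul_one]
    rw [div_pow, div_pow, hR, ← add_div, div_eq_one_iff_eq hpos.ne']
    simp only [S, mul_pow, div_pow]
  · calc S = (σ k * (∑ m, w k m * ξ (Sum.inl m)) * v + dc k / v * ξ (Sum.inr ())) ^ 2 := by
          have hterm : σ k * (σ k * v / √S) * v + dc k / v * (dc k / v / √S) = S / √S := by
            simp only [S]
            ring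
          rw [hαk, show ξ (Sum.inr ()) = dc k / v / √S from rfl, hterm, div_pow, hR, sq,
            mul_self_div_self]
      _ ≤ singularHessianForm σ dc w v ξ :=
        single_le_sum (f := fun i => (σ i * (∑ m, w i m * ξ (Sum.inl m)) * v
          + dc i / v * ξ (Sum.inr ())) ^ 2) (fun i _ => sq_nonneg _) (mem_univ k)

theorem sum_sq_div_sq_eq_mul_sum_sq (hσ : ∀ i, σ i ≠ 0) {o : ρ → ℝ} {v : ℝ}
    (hd : ∀ i, σ i * o i * v = dc i) : ∑ i, dc i ^ 2 / σ i ^ 2 = v ^ 2 * ∑ i, o i ^ 2 := by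
  rw [mul_sum]
  exact sum_congr rfl fun i _ => by rw [← hd i]; field_simp [hσ i]

variable [Fintype ν] [DecidableEq ρ]

theorem singular_mul_eq_of_forall_mul_eq
    (he : ∀ i j, ∑ n, e i n * e j n = if i = j then 1 else 0)
    (hX : ∀ n m, X n m = ∑ i, σ i * e i n * w i m) {y : ν → ℝ}
    (hy : ∀ n, y n = ∑ i, dc i * e i n) {u : μ → ℝ} {v : ℝ}
    (h : ∀ n, (∑ m, X n m * u m) * v = y n) (i : ρ) :
    σ i * (∑ m, w i m * u m) * v = dc i := by
  refine sub_eq_zero.mp (eq_zero_of_sum_mul_eq_zero he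
    (c := fun i => σ i * (∑ m, w i m * u m) * v - dc i) (fun n => ?_) i)
  simp only [sub_mul, sum_sub_distrib, ← hy, ← h n, sum_mul_eq_sum_singular hX, sum_mul]
  exact sub_eq_zero.mpr (sum_congr rfl fun i _ => by ring)

theorem sum_sq_eq_singularHessianForm (he : ∀ i j, ∑ n, e i n * e j n = if i = j then 1 else 0)
    (hX : ∀ n m, X n m = ∑ i, σ i * e i n * w i m) {u : μ → ℝ} {v : ℝ} (hv : v ≠ 0)
    (hd : ∀ i, σ i * (∑ m, w i m * u m) * v = dc i) (ξ : EuclideanSpace ℝ (μ ⊕ Unit)) :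
    ∑ n, ((∑ m, X n m * ξ (Sum.inl m)) * v + (∑ m, X n m * u m) * ξ (Sum.inr ())) ^ 2
      = singularHessianForm σ dc w v ξ := by
  have hcoord : ∀ n, (∑ m, X n m * ξ (Sum.inl m)) * v + (∑ m, X n m * u m) * ξ (Sum.inr ())
      = ∑ i, (σ i * (∑ m, w i m * ξ (Sum.inl m)) * v + dc i / v * ξ (Sum.inr ())) * e i n := by
    intro n
    simp only [sum_mul_eq_sum_singular hX, sum_mul, ← sum_add_distrib, ← hd]
    exact sum_congr rfl fun i _ => by field_simp
  simp only [hcoord, sum_sq_sum_mul_eq_sum_sq he, singularHessianForm]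

theorem singularHessianForm_le (hw : ∀ i j, ∑ m, w i m * w j m = if i = j then 1 else 0)
    {k : ρ} (hσ : ∀ i, σ i ^ 2 ≤ σ k ^ 2) (v : ℝ) {ξ : EuclideanSpace ℝ (μ ⊕ Unit)}
    (hξ : ‖ξ‖ = 1) :
    singularHessianForm σ dc w v ξ ≤ σ k ^ 2 * v ^ 2 + (∑ i, dc i ^ 2) / v ^ 2 := by
  have hp : ∑ i, (σ i * (∑ m, w i m * ξ (Sum.inl m)) * v) ^ 2
      ≤ σ k ^ 2 * v ^ 2 * ∑ m, ξ (Sum.inl m) ^ 2 := calc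
    _ ≤ ∑ i, σ k ^ 2 * v ^ 2 * (∑ m, w i m * ξ (Sum.inl m)) ^ 2 := by
      refine sum_le_sum fun i _ => ?_
      calc _ = σ i ^ 2 * (v ^ 2 * (∑ m, w i m * ξ (Sum.inl m)) ^ 2) := by ring
        _ ≤ σ k ^ 2 * (v ^ 2 * (∑ m, w i m * ξ (Sum.inl m)) ^ 2) :=
          mul_le_mul_of_nonneg_right (hσ i) (by positivity)
        _ = _ := by ring
    _ ≤ σ k ^ 2 * v ^ 2 * ∑ m, ξ (Sum.inl m) ^ 2 := by
      rw [← mul_sum]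
      exact mul_le_mul_of_nonneg_left (sum_sq_sum_mul_le_sum_sq hw _) (by positivity)
  have hq : ∑ i, (dc i / v * ξ (Sum.inr ())) ^ 2 ≤ (∑ i, dc i ^ 2) / v ^ 2 * ξ (Sum.inr ()) ^ 2 :=
    le_of_eq (by simp only [mul_pow, div_pow, sum_mul, sum_div])
  calc singularHessianForm σ dc w v ξ
      ≤ (σ k ^ 2 * v ^ 2 + (∑ i, dc i ^ 2) / v ^ 2)
        * (∑ m, ξ (Sum.inl m) ^ 2 + ξ (Sum.inr ()) ^ 2) :=
        sum_add_sq_le_add_mul_add _ _ _ (by positivity) (by positivity) (by positivity)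
          (by positivity) hp hq
    _ = σ k ^ 2 * v ^ 2 + (∑ i, dc i ^ 2) / v ^ 2 := by
      rw [← norm_sq_eq_sum_inl_add_inr, hξ, one_pow, mul_one]

end SingularCoordinates

theorem fderiv_fderiv_const_mul_sum_sq_apply {E ι : Type*} [NormedAddCommGroup E]
    [NormedSpace ℝ E] [Fintype ι] {P : ι → E → ℝ} {P' : ι → E → E →L[ℝ] ℝ}
    {P'' : ι → E →L[ℝ] E →L[ℝ] ℝ} {θ₀ : E} (hP : ∀ n θ, HasFDerivAt (P n) (P' n θ) θ)
    (hP' : ∀ n, HasFDerivAt (P' n) (P'' n) θ₀) (h0 : ∀ n, P n θ₀ = 0) (c : ℝ) (ξ : E) :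
    fderiv ℝ (fderiv ℝ fun θ => c * ∑ n, P n θ ^ 2) θ₀ ξ ξ = 2 * c * ∑ n, P' n θ₀ ξ ^ 2 := by
  have hD : fderiv ℝ (fun θ => c * ∑ n, P n θ ^ 2) = fun θ => c • ∑ n, (2 * P n θ) • P' n θ :=
    funext fun θ => HasFDerivAt.fderiv <| by
      simpa using (HasFDerivAt.fun_sum fun n _ => (hP n θ).pow 2).const_mul c
  have hD2 : HasFDerivAt (fun θ => c • ∑ n, (2 * P n θ) • P' n θ)
      (c • ∑ n, ((2 * P n θ₀) • P'' n + ((2 : ℝ) • P' n θ₀).smulRight (P' n θ₀))) θ₀ :=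
    (HasFDerivAt.fun_sum fun n _ => ((hP n θ₀).const_mul 2).fun_smul (hP' n)).fun_const_smul c
  rw [hD, hD2.fderiv]
  simp only [smul_apply, _root_.sum_apply, add_apply, ContinuousLinearMap.smulRight_apply, h0,
    mul_zero, zero_smul, zero_add, smul_eq_mul, mul_sum]
  exact sum_congr rfl fun n _ => by ring

theorem fderiv_fderiv_const_mul_sum_sq_mul_sub_apply {E ι : Type*} [NormedAddCommGroup E]
    [NormedSpace ℝ E] [Fintype ι] (A : ι → E →L[ℝ] ℝ) (B : E →L[ℝ] ℝ) (y : ι → ℝ) {θ₀ : E}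
    (h0 : ∀ n, A n θ₀ * B θ₀ = y n) (c : ℝ) (ξ : E) :
    fderiv ℝ (fderiv ℝ fun θ => c * ∑ n, (A n θ * B θ - y n) ^ 2) θ₀ ξ ξ
      = 2 * c * ∑ n, (A n ξ * B θ₀ + A n θ₀ * B ξ) ^ 2 := by
  let K : ι → E →L[ℝ] E →L[ℝ] ℝ := fun n => (A n).smulRight B + B.smulRight (A n)
  have hK : ∀ n θ, HasFDerivAt (fun θ => A n θ * B θ - y n) (K n θ) θ := fun n θ =>
    (((A n).hasFDerivAt.fun_mul B.hasFDerivAt).sub_const (y n)).congr_fderiv (by ext; simp [K])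
  rw [fderiv_fderiv_const_mul_sum_sq_apply hK (fun n => (K n).hasFDerivAt)
    (fun n => sub_eq_zero.mpr (h0 n))]
  simp only [K, add_apply, ContinuousLinearMap.smulRight_apply, smul_apply, smul_eq_mul]
  exact congrArg _ (sum_congr rfl fun n _ => by ring)

theorem fderiv_fderiv_twoLayerLoss_apply {ν μ : Type*} [Fintype ν] [Fintype μ]
    (X : Matrix ν μ ℝ) (y : ν → ℝ) (c : ℝ) {θ₀ : EuclideanSpace ℝ (μ ⊕ Unit)}
    (h0 : ∀ n, (∑ m, X n m * θ₀ (Sum.inl m)) * θ₀ (Sum.inr ()) = y n)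
    (ξ : EuclideanSpace ℝ (μ ⊕ Unit)) :
    fderiv ℝ (fderiv ℝ fun θ : EuclideanSpace ℝ (μ ⊕ Unit) =>
        c * ∑ n, ((∑ m, X n m * θ (Sum.inl m)) * θ (Sum.inr ()) - y n) ^ 2) θ₀ ξ ξ
      = 2 * c * ∑ n, ((∑ m, X n m * ξ (Sum.inl m)) * θ₀ (Sum.inr ())
          + (∑ m, X n m * θ₀ (Sum.inl m)) * ξ (Sum.inr ())) ^ 2 := by
  let A : ν → EuclideanSpace ℝ (μ ⊕ Unit) →L[ℝ] ℝ := fun n =>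
    ∑ m, X n m • EuclideanSpace.proj (Sum.inl m)
  let B : EuclideanSpace ℝ (μ ⊕ Unit) →L[ℝ] ℝ := EuclideanSpace.proj (Sum.inr ())
  have hA : ∀ n θ, A n θ = ∑ m, X n m * θ (Sum.inl m) := fun n θ => by simp [A]
  have hB : ∀ θ, B θ = θ (Sum.inr ()) := fun θ => rfl
  simpa only [hA, hB] using fderiv_fderiv_const_mul_sum_sq_mul_sub_apply A B y
    (fun n => by simpa only [hA, hB] using h0 n) c ξ

theorem sharpness_le {E : Type*} [NormedAddCommGroup E] [NormedSpace ℝ E] {L : E → ℝ} {θ : E}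
    {M : ℝ} (hM : 0 ≤ M) (h : ∀ ξ, ‖ξ‖ = 1 → fderiv ℝ (fderiv ℝ L) θ ξ ξ ≤ M) :
    sharpness L θ ≤ M :=
  Real.sSup_le (by rintro _ ⟨ξ, hξ, rfl⟩; exact h ξ hξ) hM

theorem le_sharpness {E : Type*} [NormedAddCommGroup E] [NormedSpace ℝ E] {L : E → ℝ} {θ : E}
    {M : ℝ} (h : ∀ ξ, ‖ξ‖ = 1 → fderiv ℝ (fderiv ℝ L) θ ξ ξ ≤ M) {ξ : E} (hξ : ‖ξ‖ = 1) :
    fderiv ℝ (fderiv ℝ L) θ ξ ξ ≤ sharpness L θ :=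
  le_csSup ⟨M, by rintro _ ⟨ξ, hξ, rfl⟩; exact h ξ hξ⟩ ⟨ξ, hξ, rfl⟩

theorem two_layer_sharpness_at_minimizer_general
    (N dd r : ℕ) (hN : 0 < N) (hr : 0 < r)
    (X : Matrix (Fin N) (Fin dd) ℝ)
    (σ : Fin r → ℝ) (e : Fin r → Fin N → ℝ) (w : Fin r → Fin dd → ℝ)
    (dc : Fin r → ℝ) (y : Fin N → ℝ)
    (hσpos : ∀ i, 0 < σ i)
    (hσdec : ∀ i j : Fin r, i ≤ j → σ j ≤ σ i)
    (he : ∀ i j : Fin r, ∑ n, e i n * e j n = if i = j then (1 : ℝ) else 0)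
    (hw : ∀ i j : Fin r, ∑ m, w i m * w j m = if i = j then (1 : ℝ) else 0)
    (hX : ∀ n m, X n m = ∑ i, σ i * e i n * w i m)
    (hy : ∀ n, y n = ∑ i, dc i * e i n)
    (L : EuclideanSpace ℝ (Fin dd ⊕ Unit) → ℝ)
    (hL : ∀ θ, L θ = (1 / (2 * (N : ℝ))) *
      ∑ n, ((∑ m, X n m * θ (Sum.inl m)) * θ (Sum.inr ()) - y n) ^ 2)
    (Q : ℝ) (hQ : Q = ∑ i, dc i ^ 2 / σ i ^ 2) (hQpos : 0 < Q)
    (θs : EuclideanSpace ℝ (Fin dd ⊕ Unit))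
    (hzero : L θs = 0)
    (C : ℝ)
    (hC : C = (∑ i, (∑ m, w i m * θs (Sum.inl m)) ^ 2) - θs (Sum.inr ()) ^ 2) :
    θs (Sum.inr ()) ≠ 0 ∧
    θs (Sum.inr ()) ^ 2 = (Real.sqrt (C ^ 2 + 4 * Q) - C) / 2 ∧
    (1 / (N : ℝ)) * (σ ⟨0, hr⟩ ^ 2 * θs (Sum.inr ()) ^ 2
        + dc ⟨0, hr⟩ ^ 2 / θs (Sum.inr ()) ^ 2) ≤ sharpness L θs ∧
    sharpness L θs ≤ (1 / (N : ℝ)) * (σ ⟨0, hr⟩ ^ 2 * θs (Sum.inr ()) ^ 2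
        + (∑ i, dc i ^ 2) / θs (Sum.inr ()) ^ 2) := by
  have hres : ∀ n, (∑ m, X n m * θs (Sum.inl m)) * θs (Sum.inr ()) = y n := by
    rw [hL] at hzero
    exact fun n => sub_eq_zero.mp <|
      eq_zero_of_mul_sum_sq_eq_zero univ (by positivity) hzero (mem_univ n)
  have hd := singular_mul_eq_of_forall_mul_eq he hX hy hres
  have hQv := hQ.trans (sum_sq_div_sq_eq_mul_sum_sq (fun i => (hσpos i).ne') hd)
  have hv : θs (Sum.inr ()) ≠ 0 := fun h => by simp [h] at hQv; linarith
  have hHess : ∀ ξ, fderiv ℝ (fderiv ℝ L) θs ξ ξ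
      = 1 / (N : ℝ) * singularHessianForm σ dc w (θs (Sum.inr ())) ξ := fun ξ => by
    rw [show L = _ from funext hL, fderiv_fderiv_twoLayerLoss_apply X y _ hres,
      sum_sq_eq_singularHessianForm he hX hv hd]
    ring
  have hσ : ∀ i, σ i ^ 2 ≤ σ ⟨0, hr⟩ ^ 2 := fun i =>
    pow_le_pow_left₀ (hσpos i).le (hσdec _ _ (Nat.zero_le _)) 2
  have hupper : ∀ ξ, ‖ξ‖ = 1 → fderiv ℝ (fderiv ℝ L) θs ξ ξ
      ≤ 1 / (N : ℝ) * (σ ⟨0, hr⟩ ^ 2 * θs (Sum.inr ()) ^ 2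
        + (∑ i, dc i ^ 2) / θs (Sum.inr ()) ^ 2) := fun ξ hξ =>
    hHess ξ ▸ mul_le_mul_of_nonneg_left (singularHessianForm_le hw hσ _ hξ) (by positivity)
  have hσ₀ := hσpos ⟨0, hr⟩
  obtain ⟨ξ, hξ, hlow⟩ := exists_norm_eq_one_le_singularHessianForm
    (σ := σ) (dc := dc) (by simpa [sq] using hw ⟨0, hr⟩ ⟨0, hr⟩) (v := θs (Sum.inr ()))
    (by positivity)
  refine ⟨hv, eq_sqrt_sq_add_four_mul_sub_div_two (by positivity) (by positivity) hQv hC,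
    ?_, sharpness_le (by positivity) hupper⟩
  exact (le_sharpness hupper hξ).trans' <|
    hHess ξ ▸ mul_le_mul_of_nonneg_left hlow (by positivity)

/-- **Sharpness at minimizer, two-layer case.** -/
theorem two_layer_sharpness_at_minimizer
    (N dd r : ℕ) (hN : 0 < N) (hr : 0 < r)
    (X : Matrix (Fin N) (Fin dd) ℝ)
    (σ : Fin r → ℝ) (e : Fin r → Fin N → ℝ) (w : Fin r → Fin dd → ℝ)
    (dc : Fin r → ℝ) (y : Fin N → ℝ)
    (hσpos : ∀ i, 0 < σ i)
    (hσdec : ∀ i j : Fin r, i ≤ j → σ j ≤ σ i)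
    (he : ∀ i j : Fin r, ∑ n, e i n * e j n = if i = j then (1 : ℝ) else 0)
    (hw : ∀ i j : Fin r, ∑ m, w i m * w j m = if i = j then (1 : ℝ) else 0)
    (hX : ∀ n m, X n m = ∑ i, σ i * e i n * w i m)
    (hrank : X.rank = r)
    (hy : ∀ n, y n = ∑ i, dc i * e i n)
    (L : EuclideanSpace ℝ (Fin dd ⊕ Unit) → ℝ)
    (hL : ∀ θ, L θ = (1 / (2 * (N : ℝ))) *
      ∑ n, ((∑ m, X n m * θ (Sum.inl m)) * θ (Sum.inr ()) - y n) ^ 2)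
    (Q : ℝ) (hQ : Q = ∑ i, dc i ^ 2 / σ i ^ 2) (hQpos : 0 < Q)
    (θs : EuclideanSpace ℝ (Fin dd ⊕ Unit))
    (hmin : ∀ θ, L θs ≤ L θ) (hzero : L θs = 0)
    (C : ℝ)
    (hC : C = (∑ i, (∑ m, w i m * θs (Sum.inl m)) ^ 2) - θs (Sum.inr ()) ^ 2) :
    θs (Sum.inr ()) ≠ 0 ∧
    θs (Sum.inr ()) ^ 2 = (Real.sqrt (C ^ 2 + 4 * Q) - C) / 2 ∧
    (1 / (N : ℝ)) * (σ ⟨0, hr⟩ ^ 2 * θs (Sum.inr ()) ^ 2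
        + dc ⟨0, hr⟩ ^ 2 / θs (Sum.inr ()) ^ 2) ≤ sharpness L θs ∧
    sharpness L θs ≤ (1 / (N : ℝ)) * (σ ⟨0, hr⟩ ^ 2 * θs (Sum.inr ()) ^ 2
        + (∑ i, dc i ^ 2) / θs (Sum.inr ()) ^ 2) :=
  two_layer_sharpness_at_minimizer_general N dd r hN hr X σ e w dc y hσpos hσdec he hw hX hy L hL Q
    hQ hQpos θs hzero C hC
end

section
/- Consider the two-layer minimalist model trained on a dataset (X, y) with dataset difficulty Q > 0, and let θ* = (u*, v₁*) be any global minimizer of L with L(θ*) = 0. Then v₁* ≠ 0, o_i* := w_iᵀu* = d_i/(σ_i v₁*) for every i ∈ {1,…,r}, and (v₁*)² is the unique positive root of the quadratic t² + C(θ*)·t − Q = 0; explicitly, (v₁*)² = (−C(θ*) + √(C(θ*)² + 4Q))/2. -/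
open scoped BigOperators

/-- **Characterization of global minimizers of the two-layer minimalist model.**
`(v₁*)²` is the unique positive root of `t² + C(θ*)·t − Q = 0`, and
`o_i* = d_i/(σ_i v₁*)`. -/
theorem two_layer_minimizer_characterization
    (N dd r : ℕ) (hN : 0 < N) (hr : 0 < r)
    (X : Matrix (Fin N) (Fin dd) ℝ)
    (σ : Fin r → ℝ) (e : Fin r → Fin N → ℝ) (w : Fin r → Fin dd → ℝ)
    (dc : Fin r → ℝ) (y : Fin N → ℝ)
    (hσpos : ∀ i, 0 < σ i)
    (hσdec : ∀ i j : Fin r, i ≤ j → σ j ≤ σ i)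
    (he : ∀ i j : Fin r, ∑ n, e i n * e j n = if i = j then (1 : ℝ) else 0)
    (hw : ∀ i j : Fin r, ∑ m, w i m * w j m = if i = j then (1 : ℝ) else 0)
    (hX : ∀ n m, X n m = ∑ i, σ i * e i n * w i m)
    (hrank : X.rank = r)
    (hy : ∀ n, y n = ∑ i, dc i * e i n)
    (L : (Fin dd → ℝ) → ℝ → ℝ)
    (hL : ∀ u v, L u v = (1 / (2 * (N : ℝ))) *
      ∑ n, ((∑ m, X n m * u m) * v - y n) ^ 2)
    (Q : ℝ) (hQ : Q = ∑ i, dc i ^ 2 / σ i ^ 2) (hQpos : 0 < Q)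
    (us : Fin dd → ℝ) (vs : ℝ)
    (hmin : ∀ u v, L us vs ≤ L u v) (hzero : L us vs = 0)
    (C : ℝ)
    (hC : C = (∑ i, (∑ m, w i m * us m) ^ 2) - vs ^ 2) :
    vs ≠ 0 ∧
    (∀ i : Fin r, (∑ m, w i m * us m) = dc i / (σ i * vs)) ∧
    (0 < vs ^ 2 ∧ (vs ^ 2) ^ 2 + C * vs ^ 2 - Q = 0 ∧
      ∀ t : ℝ, 0 < t → t ^ 2 + C * t - Q = 0 → t = vs ^ 2) ∧
    vs ^ 2 = (-C + Real.sqrt (C ^ 2 + 4 * Q)) / 2 := by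

  classical
  set o : Fin r → ℝ := fun i => ∑ m, w i m * us m with ho
  -- Step 1: every residual is zero
  have hres : ∀ n, (∑ m, X n m * us m) * vs - y n = 0 := by
    have h0 : ∑ n, ((∑ m, X n m * us m) * vs - y n) ^ 2 = 0 := by
      have hz := hzero
      rw [hL] at hz
      have hNpos : (0:ℝ) < 1 / (2 * (N:ℝ)) := by positivity
      rcases mul_eq_zero.mp hz with h | h
      · exact absurd h (ne_of_gt hNpos)
      · exact h
    intro n
    have := (Finset.sum_eq_zero_iff_of_nonneg (fun n _ => sq_nonneg _)).mp h0 n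
      (Finset.mem_univ n)
    exact pow_eq_zero_iff (by norm_num) |>.mp this
  -- Step 2: key identity σ j * o j * vs = dc j
  have key : ∀ j, σ j * o j * vs = dc j := by
    intro j
    have h1 : ∀ n, (∑ i, σ i * o i * vs * e i n) = ∑ i, dc i * e i n := by
      intro n
      have h := hres n
      have hXn : (∑ m, X n m * us m) * vs = ∑ i, σ i * o i * vs * e i n := by
        have : ∑ m, X n m * us m = ∑ i, σ i * o i * e i n := by
          simp only [hX, Finset.sum_mul]
          rw [Finset.sum_comm]
          apply Finset.sum_congr rfl
          intro i _
          simp only [ho, Finset.mul_sum]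
          rw [Finset.sum_mul]
          exact Finset.sum_congr rfl fun m _ => by ring
        rw [this, Finset.sum_mul]
        apply Finset.sum_congr rfl
        intro i _
        ring
      have hyn := hy n
      rw [hyn] at h
      rw [← hXn]
      linarith [h]
    have h2 : ∑ n, (∑ i, σ i * o i * vs * e i n) * e j n
        = ∑ n, (∑ i, dc i * e i n) * e j n := by
      apply Finset.sum_congr rfl
      intro n _
      rw [h1 n]
    have hL2 : ∑ n, (∑ i, σ i * o i * vs * e i n) * e j n = σ j * o j * vs := by
      calc ∑ n, (∑ i, σ i * o i * vs * e i n) * e j n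
          = ∑ i, σ i * o i * vs * (∑ n, e i n * e j n) := by
            simp only [Finset.sum_mul]
            rw [Finset.sum_comm]
            apply Finset.sum_congr rfl
            intro i _
            conv_rhs => rw [Finset.mul_sum]
            apply Finset.sum_congr rfl
            intro n _
            ring
        _ = σ j * o j * vs := by
            simp only [he]
            rw [Finset.sum_eq_single j]
            · simp
            · intro i _ hij; simp [hij]
            · intro h; exact absurd (Finset.mem_univ j) h
    have hR2 : ∑ n, (∑ i, dc i * e i n) * e j n = dc j := by
      calc ∑ n, (∑ i, dc i * e i n) * e j n
          = ∑ i, dc i * (∑ n, e i n * e j n) := by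
            simp only [Finset.sum_mul]
            rw [Finset.sum_comm]
            apply Finset.sum_congr rfl
            intro i _
            conv_rhs => rw [Finset.mul_sum]
            apply Finset.sum_congr rfl
            intro n _
            ring
        _ = dc j := by
            simp only [he]
            rw [Finset.sum_eq_single j]
            · simp
            · intro i _ hij; simp [hij]
            · intro h; exact absurd (Finset.mem_univ j) h
    rw [hL2, hR2] at h2
    exact h2
  -- Step 3: vs ≠ 0
  have hvs : vs ≠ 0 := by
    intro hv
    have hdc : ∀ j, dc j = 0 := by
      intro j
      have := key j
      rw [hv] at this
      simpa using this.symm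
    have : Q = 0 := by
      rw [hQ]
      apply Finset.sum_eq_zero
      intro i _
      rw [hdc i]
      simp
    linarith
  -- Step 4: o i = dc i / (σ i * vs)
  have hoeq : ∀ i, o i = dc i / (σ i * vs) := by
    intro i
    have hσv : σ i * vs ≠ 0 := mul_ne_zero (hσpos i).ne' hvs
    rw [eq_div_iff hσv, ← key i]
    ring
  -- Step 5: sum of squares
  have hsum : ∑ i, o i ^ 2 = Q / vs ^ 2 := by
    rw [hQ, Finset.sum_div]
    apply Finset.sum_congr rfl
    intro i _
    rw [hoeq i, div_pow, mul_pow, div_div]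
  have hvs2 : (0:ℝ) < vs ^ 2 := by positivity
  have hCeq : C = Q / vs ^ 2 - vs ^ 2 := by
    rw [hC, ← hsum]
  have hroot : (vs ^ 2) ^ 2 + C * vs ^ 2 - Q = 0 := by
    rw [hCeq]
    field_simp
    try ring
  have huniq : ∀ t : ℝ, 0 < t → t ^ 2 + C * t - Q = 0 → t = vs ^ 2 := by
    intro t ht hteq
    have hfac : (t - vs ^ 2) * (t + vs ^ 2 + C) = 0 := by
      have : t + vs ^ 2 + C = t + Q / vs ^ 2 := by rw [hCeq]; ring
      nlinarith [hroot, hteq]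
    rcases mul_eq_zero.mp hfac with h | h
    · linarith
    · exfalso
      have hQs : 0 < Q / vs ^ 2 := by positivity
      have : t + vs ^ 2 + C = t + Q / vs ^ 2 := by rw [hCeq]; ring
      rw [this] at h
      linarith
  refine ⟨hvs, hoeq, ⟨hvs2, hroot, huniq⟩, ?_⟩
  have hdisc : (0:ℝ) ≤ C ^ 2 + 4 * Q := by nlinarith
  have hsq : Real.sqrt (C ^ 2 + 4 * Q) ^ 2 = C ^ 2 + 4 * Q := Real.sq_sqrt hdisc
  have hsqgt : |C| < Real.sqrt (C ^ 2 + 4 * Q) := by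
    have h1 : Real.sqrt (C ^ 2) < Real.sqrt (C ^ 2 + 4 * Q) := by
      apply Real.sqrt_lt_sqrt (sq_nonneg C)
      linarith
    rwa [Real.sqrt_sq_eq_abs] at h1
  set t := (-C + Real.sqrt (C ^ 2 + 4 * Q)) / 2 with htdef
  have htpos : 0 < t := by
    rw [htdef]
    have hlt : C < Real.sqrt (C ^ 2 + 4 * Q) := lt_of_le_of_lt (le_abs_self C) hsqgt
    linarith
  have hteq : t ^ 2 + C * t - Q = 0 := by
    rw [htdef]
    nlinarith [hsq]
  exact (huniq t htpos hteq).symm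
end

section
/- Consider the depth-D minimalist model (D ≥ 2) trained on a dataset (X, y) with dataset difficulty Q > 0. Let θ* be a global minimizer of L with L(θ*) = 0 that is balanced. Then the sharpness satisfies (1/N)·[σ₁² Q^{(D−1)/D} + (D−1) d₁² Q^{−1/D}] ≤ S(θ*) ≤ (1/N)·[σ₁² Q^{(D−1)/D} + (D−1)(Σ_{i=1}^r d_i²) Q^{−1/D}]. -/
/-!
At a zero-loss point every residual vanishes, so the Hessian of the loss is the Gauss–Newton
form `ξ ↦ (1/N) ‖J ξ‖²`. Written in the singular bases of `X`, with `P = ∏ⱼ vⱼ`, zero loss reads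
`σᵢ ⟪wᵢ, u⟫ P = dᵢ`, and the `i`-th row of `J` becomes `ξ ↦ P σᵢ ⟪wᵢ, ξᵤ⟫ + dᵢ ∑ⱼ ξ_{vⱼ} / vⱼ`.
Testing on the first row gives the lower bound `P² σ₁² + d₁² ∑ⱼ vⱼ⁻²`; Bessel's inequality and
Cauchy–Schwarz give the upper bound `P² σ₁² + (∑ᵢ dᵢ²) ∑ⱼ vⱼ⁻²`. Balancedness forces
`vⱼ² = ∑ᵢ ⟪wᵢ, u⟫² = Q / P²`, hence `P² = (Q / P²)^(D-1)`, i.e. `P² = Q^((D-1)/D)`, and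
`∑ⱼ vⱼ⁻² = (D-1) P² / Q = (D-1) Q^(-1/D)`.
-/

open scoped BigOperators

open Finset

section Hessian
variable {E : Type*} [NormedAddCommGroup E] [NormedSpace ℝ E] {L : E → ℝ} {θ : E} {B : ℝ}

theorem sharpness_le_of_forall_le (hB : 0 ≤ B)
    (h : ∀ ξ, fderiv ℝ (fderiv ℝ L) θ ξ ξ ≤ B * ‖ξ‖ ^ 2) : sharpness L θ ≤ B := by
  refine Real.sSup_le ?_ hB
  rintro c ⟨ξ, hξ, rfl⟩
  simpa [hξ] using h ξ

theorem le_sharpness_of_forall_le (h : ∀ ξ, fderiv ℝ (fderiv ℝ L) θ ξ ξ ≤ B * ‖ξ‖ ^ 2)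
    {A : ℝ} {ξ₀ : E} (hξ₀ : ξ₀ ≠ 0) (hA : A * ‖ξ₀‖ ^ 2 ≤ fderiv ℝ (fderiv ℝ L) θ ξ₀ ξ₀) :
    A ≤ sharpness L θ := by
  have hbdd : BddAbove {c : ℝ | ∃ ξ : E, ‖ξ‖ = 1 ∧ fderiv ℝ (fderiv ℝ L) θ ξ ξ = c} := by
    refine ⟨B, ?_⟩
    rintro c ⟨ξ, hξ, rfl⟩
    simpa [hξ] using h ξ
  have hn : 0 < ‖ξ₀‖ := norm_pos_iff.mpr hξ₀
  refine le_csSup_of_le hbdd ⟨‖ξ₀‖⁻¹ • ξ₀, by simp [norm_smul, hn.ne'], rfl⟩ ?_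
  simp only [map_smul, smul_apply, smul_eq_mul]
  rw [le_inv_mul_iff₀ hn, le_inv_mul_iff₀ hn]
  nlinarith

theorem fderiv_fderiv_const_mul_sum_sq_apply_s2 {ν : Type*} [Fintype ν] (c : ℝ) {φ : ν → E → ℝ}
    (hφ : ∀ n, ContDiff ℝ 2 (φ n)) (hθ : ∀ n, φ n θ = 0) (ξ : E) :
    fderiv ℝ (fderiv ℝ fun x => c * ∑ n, φ n x ^ 2) θ ξ ξ
      = 2 * c * ∑ n, (fderiv ℝ (φ n) θ ξ) ^ 2 := by
  have hφ' : ∀ n x, HasFDerivAt (φ n) (fderiv ℝ (φ n) x) x := fun n x =>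
    ((hφ n).differentiable (by norm_num) x).hasFDerivAt
  have hφ'' : ∀ n, HasFDerivAt (fderiv ℝ (φ n)) (fderiv ℝ (fderiv ℝ (φ n)) θ) θ := fun n =>
    (((hφ n).fderiv_right (m := 1) (by norm_num)).differentiable (by norm_num) θ).hasFDerivAt
  have hderiv : fderiv ℝ (fun x => c * ∑ n, φ n x ^ 2)
      = fun x => c • ∑ n, (2 * φ n x) • fderiv ℝ (φ n) x := by
    funext x
    refine ((HasFDerivAt.fun_sum fun n _ => (hφ' n x).pow 2).const_mul c).fderiv.trans ?_
    simp
  rw [hderiv, ((HasFDerivAt.fun_sum (u := univ) fun n _ =>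
    ((hφ' n θ).const_mul 2).fun_smul (hφ'' n)).fun_const_smul c).fderiv]
  simp only [hθ, mul_zero, zero_smul, zero_add, smul_apply, _root_.sum_apply,
    ContinuousLinearMap.smulRight_apply, smul_eq_mul, mul_sum]
  exact sum_congr rfl fun n _ => by ring

end Hessian

theorem orthonormal_toLp_of_sum_mul_eq_ite_s2 {ι ρ : Type*} [Fintype ι] [DecidableEq ρ]
    {w : ρ → ι → ℝ} (hw : ∀ i j, ∑ m, w i m * w j m = if i = j then (1 : ℝ) else 0) :
    Orthonormal ℝ fun i => WithLp.toLp 2 (w i) := by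
  rw [orthonormal_iff_ite]
  intro i j
  simp [PiLp.inner_apply, ← hw i j, mul_comm]

namespace Orthonormal
variable {ι ρ : Type*} [Fintype ι] [Fintype ρ] {w : ρ → ι → ℝ}

theorem sum_sq_sum_mul_eq (hw : Orthonormal ℝ fun i => WithLp.toLp 2 (w i)) (c : ρ → ℝ) :
    ∑ m, (∑ i, c i * w i m) ^ 2 = ∑ i, c i ^ 2 := by
  simpa [EuclideanSpace.real_norm_sq_eq, ← sq] using hw.inner_sum c c univ

theorem sum_sq_sum_mul_le (hw : Orthonormal ℝ fun i => WithLp.toLp 2 (w i)) (z : ι → ℝ) :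
    ∑ i, (∑ m, w i m * z m) ^ 2 ≤ ∑ m, z m ^ 2 := by
  simpa [PiLp.inner_apply, EuclideanSpace.real_norm_sq_eq, mul_comm] using
    hw.sum_inner_products_le (WithLp.toLp 2 z) (s := univ)

theorem eq_zero_of_sum_mul_eq_zero (hw : Orthonormal ℝ fun i => WithLp.toLp 2 (w i))
    {c : ρ → ℝ} (hc : ∀ m, ∑ i, c i * w i m = 0) (i : ρ) : c i = 0 := by
  have h := hw.sum_sq_sum_mul_eq c
  simp only [hc, ne_eq, OfNat.ofNat_ne_zero, not_false_eq_true, zero_pow, sum_const_zero] at h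
  exact (sum_mul_self_eq_zero_iff _ c).mp (by simpa [sq] using h.symm) i (mem_univ i)

end Orthonormal

theorem sum_add_sq_le {ρ : Type*} (s : Finset ρ) (x y : ρ → ℝ) {A M β τ : ℝ} (hA : 0 ≤ A)
    (hM : 0 ≤ M) (hβ : 0 ≤ β) (hτ : 0 ≤ τ) (hx : ∑ i ∈ s, x i ^ 2 ≤ A * β)
    (hy : ∑ i ∈ s, y i ^ 2 ≤ M * τ) :
    ∑ i ∈ s, (x i + y i) ^ 2 ≤ (A + M) * (β + τ) := by
  have hexp : ∑ i ∈ s, (x i + y i) ^ 2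
      = ∑ i ∈ s, x i ^ 2 + 2 * ∑ i ∈ s, x i * y i + ∑ i ∈ s, y i ^ 2 := by
    simp only [add_sq, sum_add_distrib, mul_sum, mul_assoc]
  have hcs : (∑ i ∈ s, x i * y i) ^ 2 ≤ (A * τ) * (M * β) :=
    (sum_mul_sq_le_sq_mul_sq s x y).trans (by
      nlinarith [mul_le_mul hx hy (sum_nonneg fun i _ => sq_nonneg (y i)) (by positivity)])
  nlinarith [sq_nonneg (A * τ - M * β), mul_nonneg hA hτ, mul_nonneg hM hβ]

theorem EuclideanSpace.real_norm_sq_eq_sum_inl_add_sum_inr {ι κ : Type*} [Fintype ι]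
    [Fintype κ] (ξ : EuclideanSpace ℝ (ι ⊕ κ)) :
    ‖ξ‖ ^ 2 = ∑ m, ξ (Sum.inl m) ^ 2 + ∑ j, ξ (Sum.inr j) ^ 2 := by
  rw [EuclideanSpace.real_norm_sq_eq, Fintype.sum_sum_type]

section Gram
variable {ι κ ρ : Type*} [Fintype ι] [Fintype κ] [Fintype ρ] {w : ρ → ι → ℝ}

theorem sum_sq_coeff_le_mul_norm_sq (hw : Orthonormal ℝ fun i => WithLp.toLp 2 (w i))
    (s t : ρ → ℝ) (a : κ → ℝ) {i₀ : ρ} (hs : ∀ i, s i ^ 2 ≤ s i₀ ^ 2)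
    (ξ : EuclideanSpace ℝ (ι ⊕ κ)) :
    ∑ i, (s i * ∑ m, w i m * ξ (Sum.inl m) + t i * ∑ j, a j * ξ (Sum.inr j)) ^ 2
      ≤ (s i₀ ^ 2 + (∑ i, t i ^ 2) * ∑ j, a j ^ 2) * ‖ξ‖ ^ 2 := by
  rw [EuclideanSpace.real_norm_sq_eq_sum_inl_add_sum_inr]
  refine sum_add_sq_le _ _ _ (sq_nonneg _) (by positivity) (by positivity) (by positivity) ?_ ?_
  · calc ∑ i, (s i * ∑ m, w i m * ξ (Sum.inl m)) ^ 2
        ≤ ∑ i, s i₀ ^ 2 * (∑ m, w i m * ξ (Sum.inl m)) ^ 2 := by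
          gcongr with i
          rw [mul_pow]
          exact mul_le_mul_of_nonneg_right (hs i) (sq_nonneg _)
      _ ≤ s i₀ ^ 2 * ∑ m, ξ (Sum.inl m) ^ 2 := by
          rw [← mul_sum]
          gcongr
          exact hw.sum_sq_sum_mul_le _
  · simp only [mul_pow, ← sum_mul, mul_assoc]
    gcongr
    exact sum_mul_sq_le_sq_mul_sq _ _ _

theorem exists_mul_norm_sq_le_sum_sq_coeff (hw : Orthonormal ℝ fun i => WithLp.toLp 2 (w i))
    (s t : ρ → ℝ) (a : κ → ℝ) {i₀ : ρ} (hs : s i₀ ≠ 0) :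
    ∃ ξ : EuclideanSpace ℝ (ι ⊕ κ), ξ ≠ 0 ∧ (s i₀ ^ 2 + t i₀ ^ 2 * ∑ j, a j ^ 2) * ‖ξ‖ ^ 2
      ≤ ∑ i, (s i * ∑ m, w i m * ξ (Sum.inl m) + t i * ∑ j, a j * ξ (Sum.inr j)) ^ 2 := by
  set ξ : EuclideanSpace ℝ (ι ⊕ κ) :=
    WithLp.toLp 2 (Sum.elim (fun m => s i₀ * w i₀ m) (fun j => t i₀ * a j))
  have hl : ∀ m, ξ (Sum.inl m) = s i₀ * w i₀ m := fun m => rfl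
  have hr : ∀ j, ξ (Sum.inr j) = t i₀ * a j := fun j => rfl
  have hunit : ∑ m, w i₀ m ^ 2 = 1 := by
    have h := EuclideanSpace.real_norm_sq_eq (WithLp.toLp 2 (w i₀))
    rwa [hw.1 i₀, one_pow, eq_comm] at h
  have hnorm : ‖ξ‖ ^ 2 = s i₀ ^ 2 + t i₀ ^ 2 * ∑ j, a j ^ 2 := by
    simp only [EuclideanSpace.real_norm_sq_eq_sum_inl_add_sum_inr, hl, hr, mul_pow, ← mul_sum,
      hunit, mul_one]
  have hcoeff : s i₀ * ∑ m, w i₀ m * ξ (Sum.inl m) + t i₀ * ∑ j, a j * ξ (Sum.inr j)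
      = ‖ξ‖ ^ 2 := by
    simp only [hnorm, hl, hr, mul_left_comm _ (s i₀), mul_left_comm _ (t i₀), ← mul_sum, ← sq,
      hunit]
    ring
  have hpos : 0 < ‖ξ‖ ^ 2 := by
    rw [hnorm]
    positivity
  refine ⟨ξ, fun h => by simp [h] at hpos, ?_⟩
  rw [← hnorm, ← sq, ← hcoeff]
  exact single_le_sum (f := fun i => (s i * ∑ m, w i m * ξ (Sum.inl m)
    + t i * ∑ j, a j * ξ (Sum.inr j)) ^ 2) (fun i _ => sq_nonneg _) (mem_univ i₀)

end Gram

theorem sum_mul_eq_sum_svd {ν ι ρ : Type*} [Fintype ι] [Fintype ρ] {X : ν → ι → ℝ}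
    {σ : ρ → ℝ} {e : ρ → ν → ℝ} {w : ρ → ι → ℝ} (hX : ∀ n m, X n m = ∑ i, σ i * e i n * w i m)
    (n : ν) (z : ι → ℝ) : ∑ m, X n m * z m = ∑ i, σ i * e i n * ∑ m, w i m * z m := by
  simp only [hX, sum_mul, mul_sum]
  rw [sum_comm]
  simp only [mul_assoc]

theorem sum_sq_eq_of_mul_eq {ρ : Type*} [Fintype ρ] {σ α d : ρ → ℝ} {P : ℝ}
    (hσ : ∀ i, σ i ≠ 0) (hP : P ≠ 0) (h : ∀ i, σ i * α i * P = d i) :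
    ∑ i, α i ^ 2 = (∑ i, d i ^ 2 / σ i ^ 2) / P ^ 2 := by
  rw [sum_div]
  refine sum_congr rfl fun i _ => ?_
  rw [← h i]
  field_simp [hσ i]

theorem sq_eq_rpow_of_prod_eq {D : ℕ} (hD : 1 ≤ D) {Q P : ℝ} (hQ : 0 < Q) (hP : P ≠ 0)
    {v : Fin (D - 1) → ℝ} (hprod : ∏ j, v j = P) (hv : ∀ j, v j ^ 2 = Q / P ^ 2) :
    P ^ 2 = Q ^ (((D : ℝ) - 1) / D) := by
  have hP2 : P ^ 2 = (Q / P ^ 2) ^ (D - 1) := by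
    calc P ^ 2 = ∏ j, v j ^ 2 := by rw [← hprod, prod_pow]
      _ = (Q / P ^ 2) ^ (D - 1) := by
        rw [Fintype.prod_congr _ _ hv, prod_const, card_univ, Fintype.card_fin]
  have hpow : (P ^ 2) ^ D = Q ^ (D - 1) := by
    rw [← Nat.sub_add_cancel hD, pow_succ, Nat.add_sub_cancel]
    nth_rewrite 2 [hP2]
    rw [← mul_pow, mul_div_cancel₀ _ (by positivity)]
  rw [← Real.pow_rpow_inv_natCast (n := D) (sq_nonneg P) (by omega), hpow, ← Real.rpow_natCast,
    ← Real.rpow_mul hQ.le, Nat.cast_sub hD, Nat.cast_one, div_eq_mul_inv]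

theorem rpow_neg_one_div_eq_div {Q : ℝ} (hQ : 0 < Q) {D : ℝ} (hD : D ≠ 0) :
    Q ^ (-1 / D) = Q ^ ((D - 1) / D) / Q := by
  rw [← Real.rpow_sub_one hQ.ne']
  congr 1
  field_simp
  ring

namespace MinimalistModel
variable {ν ι κ ρ : Type*} [Fintype ι] [Fintype κ] [Fintype ρ]

def residual (X : ν → ι → ℝ) (y : ν → ℝ) (n : ν) (θ : EuclideanSpace ℝ (ι ⊕ κ)) : ℝ :=
  (∑ m, X n m * θ (Sum.inl m)) * ∏ j, θ (Sum.inr j) - y n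

noncomputable def loss [Fintype ν] (N : ℝ) (X : ν → ι → ℝ) (y : ν → ℝ)
    (θ : EuclideanSpace ℝ (ι ⊕ κ)) : ℝ :=
  1 / (2 * N) * ∑ n, residual X y n θ ^ 2

theorem contDiff_residual (X : ν → ι → ℝ) (y : ν → ℝ) (n : ν) {k : WithTop ℕ∞} :
    ContDiff ℝ k (residual (κ := κ) X y n) := by
  unfold residual
  fun_prop

theorem fderiv_residual_apply [DecidableEq κ] (X : ν → ι → ℝ) (y : ν → ℝ) (n : ν)
    (θ ξ : EuclideanSpace ℝ (ι ⊕ κ)) :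
    fderiv ℝ (residual X y n) θ ξ
      = (∑ m, X n m * ξ (Sum.inl m)) * ∏ j, θ (Sum.inr j)
        + (∑ m, X n m * θ (Sum.inl m))
          * ∑ j, (∏ k ∈ univ.erase j, θ (Sum.inr k)) * ξ (Sum.inr j) := by
  have hproj : ∀ a, HasFDerivAt (fun θ : EuclideanSpace ℝ (ι ⊕ κ) => θ a)
      (EuclideanSpace.proj (𝕜 := ℝ) a : EuclideanSpace ℝ (ι ⊕ κ) →L[ℝ] ℝ) θ := fun a =>
    (EuclideanSpace.proj (𝕜 := ℝ) a : EuclideanSpace ℝ (ι ⊕ κ) →L[ℝ] ℝ).hasFDerivAt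
  have hlin := HasFDerivAt.fun_sum (u := univ) fun m _ => (hproj (Sum.inl m)).const_mul (X n m)
  have hprod := HasFDerivAt.finsetProd (u := univ) fun j _ => hproj (Sum.inr j)
  unfold residual
  rw [((hlin.fun_mul hprod).sub_const (y n)).fderiv]
  simp only [add_comm, add_apply, smul_apply, _root_.sum_apply, PiLp.proj_apply, smul_eq_mul,
    mul_comm]

variable {X : ν → ι → ℝ} {σ : ρ → ℝ} {e : ρ → ν → ℝ} {w : ρ → ι → ℝ} {d : ρ → ℝ} {y : ν → ℝ}

theorem residual_eq_sum_svd (hX : ∀ n m, X n m = ∑ i, σ i * e i n * w i m)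
    (hy : ∀ n, y n = ∑ i, d i * e i n) (n : ν) (θ : EuclideanSpace ℝ (ι ⊕ κ)) :
    residual X y n θ
      = ∑ i, (σ i * (∑ m, w i m * θ (Sum.inl m)) * ∏ j, θ (Sum.inr j) - d i) * e i n := by
  simp only [residual, sum_mul_eq_sum_svd hX, hy, sum_mul, ← sum_sub_distrib, sub_mul]
  exact sum_congr rfl fun i _ => by ring

theorem svd_coeff_eq_of_loss_eq_zero [Fintype ν] {N : ℝ} (hN : N ≠ 0)
    (hX : ∀ n m, X n m = ∑ i, σ i * e i n * w i m) (hy : ∀ n, y n = ∑ i, d i * e i n)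
    (he : Orthonormal ℝ fun i => WithLp.toLp 2 (e i)) {θ : EuclideanSpace ℝ (ι ⊕ κ)}
    (hθ : loss N X y θ = 0) (i : ρ) :
    σ i * (∑ m, w i m * θ (Sum.inl m)) * ∏ j, θ (Sum.inr j) = d i := by
  have hres : ∀ n, residual X y n θ = 0 := by
    have h := (mul_eq_zero.mp hθ).resolve_left (by positivity)
    exact fun n => (sum_mul_self_eq_zero_iff _ _).mp (by simpa [sq] using h) n (mem_univ n)
  exact sub_eq_zero.mp <| he.eq_zero_of_sum_mul_eq_zero
    (fun n => (residual_eq_sum_svd hX hy n θ).symm.trans (hres n)) i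

theorem fderiv_residual_apply_eq_sum [DecidableEq κ]
    (hX : ∀ n m, X n m = ∑ i, σ i * e i n * w i m) {θ : EuclideanSpace ℝ (ι ⊕ κ)}
    (hθ : ∀ i, σ i * (∑ m, w i m * θ (Sum.inl m)) * ∏ j, θ (Sum.inr j) = d i)
    (hv : ∀ j, θ (Sum.inr j) ≠ 0) (n : ν) (ξ : EuclideanSpace ℝ (ι ⊕ κ)) :
    fderiv ℝ (residual X y n) θ ξ
      = ∑ i, ((∏ j, θ (Sum.inr j)) * σ i * ∑ m, w i m * ξ (Sum.inl m)
          + d i * ∑ j, (θ (Sum.inr j))⁻¹ * ξ (Sum.inr j)) * e i n := by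
  set P := ∏ j, θ (Sum.inr j)
  have hS : ∑ j, (∏ k ∈ univ.erase j, θ (Sum.inr k)) * ξ (Sum.inr j)
      = P * ∑ j, (θ (Sum.inr j))⁻¹ * ξ (Sum.inr j) := by
    rw [mul_sum]
    refine sum_congr rfl fun j _ => ?_
    rw [← mul_assoc, eq_mul_inv_iff_mul_eq₀ (hv j) |>.mpr
      (prod_erase_mul _ (fun k => θ (Sum.inr k)) (mem_univ j))]
  rw [fderiv_residual_apply, hS, sum_mul_eq_sum_svd hX, sum_mul_eq_sum_svd hX]
  simp only [← hθ, sum_mul, ← sum_add_distrib]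
  exact sum_congr rfl fun i _ => by ring

theorem fderiv_fderiv_loss_apply [Fintype ν] [DecidableEq κ] (N : ℝ)
    (hX : ∀ n m, X n m = ∑ i, σ i * e i n * w i m) (hy : ∀ n, y n = ∑ i, d i * e i n)
    (he : Orthonormal ℝ fun i => WithLp.toLp 2 (e i)) {θ : EuclideanSpace ℝ (ι ⊕ κ)}
    (hθ : ∀ i, σ i * (∑ m, w i m * θ (Sum.inl m)) * ∏ j, θ (Sum.inr j) = d i)
    (hv : ∀ j, θ (Sum.inr j) ≠ 0) (ξ : EuclideanSpace ℝ (ι ⊕ κ)) :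
    fderiv ℝ (fderiv ℝ (loss N X y)) θ ξ ξ
      = 1 / N * ∑ i, ((∏ j, θ (Sum.inr j)) * σ i * ∑ m, w i m * ξ (Sum.inl m)
          + d i * ∑ j, (θ (Sum.inr j))⁻¹ * ξ (Sum.inr j)) ^ 2 := by
  have hres : ∀ n, residual X y n θ = 0 := fun n => by
    simp [residual_eq_sum_svd hX hy, hθ]
  unfold loss
  rw [fderiv_fderiv_const_mul_sum_sq_apply_s2 _ (fun n => contDiff_residual X y n) hres]
  simp only [fderiv_residual_apply_eq_sum hX hθ hv, he.sum_sq_sum_mul_eq]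
  ring

theorem sharpness_loss_mem_Icc [Fintype ν] [DecidableEq κ] {N : ℝ} (hN : 0 ≤ N)
    (hX : ∀ n m, X n m = ∑ i, σ i * e i n * w i m) (hy : ∀ n, y n = ∑ i, d i * e i n)
    (he : Orthonormal ℝ fun i => WithLp.toLp 2 (e i))
    (hw : Orthonormal ℝ fun i => WithLp.toLp 2 (w i)) {θ : EuclideanSpace ℝ (ι ⊕ κ)}
    (hθ : ∀ i, σ i * (∑ m, w i m * θ (Sum.inl m)) * ∏ j, θ (Sum.inr j) = d i)
    (hv : ∀ j, θ (Sum.inr j) ≠ 0) {i₀ : ρ} (hσ : ∀ i, σ i ^ 2 ≤ σ i₀ ^ 2) (hσ₀ : σ i₀ ≠ 0) :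
    sharpness (loss N X y) θ ∈ Set.Icc
      (1 / N * ((∏ j, θ (Sum.inr j)) ^ 2 * σ i₀ ^ 2 + d i₀ ^ 2 * ∑ j, (θ (Sum.inr j))⁻¹ ^ 2))
      (1 / N * ((∏ j, θ (Sum.inr j)) ^ 2 * σ i₀ ^ 2
        + (∑ i, d i ^ 2) * ∑ j, (θ (Sum.inr j))⁻¹ ^ 2)) := by
  set P := ∏ j, θ (Sum.inr j)
  have hPσ : ∀ i, (P * σ i) ^ 2 ≤ (P * σ i₀) ^ 2 := fun i => by
    rw [mul_pow, mul_pow]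
    exact mul_le_mul_of_nonneg_left (hσ i) (sq_nonneg P)
  have hub : ∀ ξ, fderiv ℝ (fderiv ℝ (loss N X y)) θ ξ ξ
      ≤ 1 / N * (P ^ 2 * σ i₀ ^ 2 + (∑ i, d i ^ 2) * ∑ j, (θ (Sum.inr j))⁻¹ ^ 2) * ‖ξ‖ ^ 2 :=
    fun ξ => by
      rw [fderiv_fderiv_loss_apply N hX hy he hθ hv, mul_assoc, ← mul_pow]
      gcongr
      exact sum_sq_coeff_le_mul_norm_sq hw (fun i => P * σ i) d _ hPσ ξ
  obtain ⟨ξ₀, hξ₀, hlow⟩ := exists_mul_norm_sq_le_sum_sq_coeff hw (fun i => P * σ i) d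
    (fun j => (θ (Sum.inr j))⁻¹) (mul_ne_zero (prod_ne_zero_iff.mpr fun j _ => hv j) hσ₀)
  refine ⟨le_sharpness_of_forall_le hub hξ₀ ?_, sharpness_le_of_forall_le (by positivity) hub⟩
  rw [fderiv_fderiv_loss_apply N hX hy he hθ hv, mul_assoc, ← mul_pow]
  gcongr

end MinimalistModel

theorem deep_sharpness_at_balanced_minimizer_general
    (N dd r D : ℕ) (hN : 0 < N) (hr : 0 < r) (hD : 2 ≤ D)
    (X : Matrix (Fin N) (Fin dd) ℝ)
    (σ : Fin r → ℝ) (e : Fin r → Fin N → ℝ) (w : Fin r → Fin dd → ℝ)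
    (dc : Fin r → ℝ) (y : Fin N → ℝ)
    (hσpos : ∀ i, 0 < σ i)
    (hσdec : ∀ i j : Fin r, i ≤ j → σ j ≤ σ i)
    (he : ∀ i j : Fin r, ∑ n, e i n * e j n = if i = j then (1 : ℝ) else 0)
    (hw : ∀ i j : Fin r, ∑ m, w i m * w j m = if i = j then (1 : ℝ) else 0)
    (hX : ∀ n m, X n m = ∑ i, σ i * e i n * w i m)
    (hy : ∀ n, y n = ∑ i, dc i * e i n)
    (L : EuclideanSpace ℝ (Fin dd ⊕ Fin (D - 1)) → ℝ)
    (hL : ∀ θ, L θ = (1 / (2 * (N : ℝ))) *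
      ∑ n, ((∑ m, X n m * θ (Sum.inl m)) * (∏ j, θ (Sum.inr j)) - y n) ^ 2)
    (Q : ℝ) (hQ : Q = ∑ i, dc i ^ 2 / σ i ^ 2) (hQpos : 0 < Q)
    (θs : EuclideanSpace ℝ (Fin dd ⊕ Fin (D - 1)))
    (hzero : L θs = 0)
    (hbal : ∀ j : Fin (D - 1),
      Real.sqrt (∑ i, (∑ m, w i m * θs (Sum.inl m)) ^ 2) = |θs (Sum.inr j)|) :
    (1 / (N : ℝ)) * (σ ⟨0, hr⟩ ^ 2 * Q ^ (((D : ℝ) - 1) / (D : ℝ))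
        + ((D : ℝ) - 1) * dc ⟨0, hr⟩ ^ 2 * Q ^ (-(1 : ℝ) / (D : ℝ)))
      ≤ sharpness L θs ∧
    sharpness L θs ≤ (1 / (N : ℝ)) * (σ ⟨0, hr⟩ ^ 2 * Q ^ (((D : ℝ) - 1) / (D : ℝ))
        + ((D : ℝ) - 1) * (∑ i, dc i ^ 2) * Q ^ (-(1 : ℝ) / (D : ℝ))) := by
  have hD1 : 1 ≤ D := by omega
  set P := ∏ j, θs (Sum.inr j)
  have hθ : ∀ i, σ i * (∑ m, w i m * θs (Sum.inl m)) * P = dc i :=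
    MinimalistModel.svd_coeff_eq_of_loss_eq_zero (by positivity) hX hy
      (orthonormal_toLp_of_sum_mul_eq_ite_s2 he) ((hL θs).symm.trans hzero)
  have hP : P ≠ 0 := fun hP0 => hQpos.ne' (by simp [hQ, ← hθ, hP0])
  have hv2 : ∀ j, θs (Sum.inr j) ^ 2 = Q / P ^ 2 := fun j => by
    rw [← sq_abs, ← hbal j, Real.sq_sqrt (by positivity),
      sum_sq_eq_of_mul_eq (fun i => (hσpos i).ne') hP hθ, hQ]
  have hv : ∀ j, θs (Sum.inr j) ≠ 0 := fun j h =>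
    (by positivity : 0 < Q / P ^ 2).ne' (by rw [← hv2 j, h, sq, mul_zero])
  have hP2 : P ^ 2 = Q ^ (((D : ℝ) - 1) / D) := sq_eq_rpow_of_prod_eq hD1 hQpos hP rfl hv2
  have hinv : ∑ j, (θs (Sum.inr j))⁻¹ ^ 2 = ((D : ℝ) - 1) * Q ^ (-(1 : ℝ) / D) := by
    simp only [inv_pow, hv2, inv_div, sum_const, card_univ, Fintype.card_fin, nsmul_eq_mul,
      Nat.cast_sub hD1, Nat.cast_one, rpow_neg_one_div_eq_div hQpos (by positivity : (D : ℝ) ≠ 0),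
      ← hP2]
  rw [show L = MinimalistModel.loss (N : ℝ) X y from funext hL]
  obtain ⟨hlow, hup⟩ := MinimalistModel.sharpness_loss_mem_Icc (N := N) (by positivity) hX hy
    (orthonormal_toLp_of_sum_mul_eq_ite_s2 he) (orthonormal_toLp_of_sum_mul_eq_ite_s2 hw) hθ hv
    (i₀ := ⟨0, hr⟩) (fun i => pow_le_pow_left₀ (hσpos i).le
      (hσdec _ i (Fin.le_def.mpr (Nat.zero_le _))) 2) (hσpos _).ne'
  rw [hP2, hinv] at hlow hup
  exact ⟨le_of_eq_of_le (by ring) hlow, hup.trans_eq (by ring)⟩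

/-- **Sharpness at a balanced minimizer, depth-`D` minimalist model.** -/
theorem deep_sharpness_at_balanced_minimizer
    (N dd r D : ℕ) (hN : 0 < N) (hr : 0 < r) (hD : 2 ≤ D)
    (X : Matrix (Fin N) (Fin dd) ℝ)
    (σ : Fin r → ℝ) (e : Fin r → Fin N → ℝ) (w : Fin r → Fin dd → ℝ)
    (dc : Fin r → ℝ) (y : Fin N → ℝ)
    (hσpos : ∀ i, 0 < σ i)
    (hσdec : ∀ i j : Fin r, i ≤ j → σ j ≤ σ i)
    (he : ∀ i j : Fin r, ∑ n, e i n * e j n = if i = j then (1 : ℝ) else 0)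
    (hw : ∀ i j : Fin r, ∑ m, w i m * w j m = if i = j then (1 : ℝ) else 0)
    (hX : ∀ n m, X n m = ∑ i, σ i * e i n * w i m)
    (hrank : X.rank = r)
    (hy : ∀ n, y n = ∑ i, dc i * e i n)
    (L : EuclideanSpace ℝ (Fin dd ⊕ Fin (D - 1)) → ℝ)
    (hL : ∀ θ, L θ = (1 / (2 * (N : ℝ))) *
      ∑ n, ((∑ m, X n m * θ (Sum.inl m)) * (∏ j, θ (Sum.inr j)) - y n) ^ 2)
    (Q : ℝ) (hQ : Q = ∑ i, dc i ^ 2 / σ i ^ 2) (hQpos : 0 < Q)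
    (θs : EuclideanSpace ℝ (Fin dd ⊕ Fin (D - 1)))
    (hmin : ∀ θ, L θs ≤ L θ) (hzero : L θs = 0)
    (hbal : ∀ j : Fin (D - 1),
      Real.sqrt (∑ i, (∑ m, w i m * θs (Sum.inl m)) ^ 2) = |θs (Sum.inr j)|) :
    (1 / (N : ℝ)) * (σ ⟨0, hr⟩ ^ 2 * Q ^ (((D : ℝ) - 1) / (D : ℝ))
        + ((D : ℝ) - 1) * dc ⟨0, hr⟩ ^ 2 * Q ^ (-(1 : ℝ) / (D : ℝ)))
      ≤ sharpness L θs ∧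
    sharpness L θs ≤ (1 / (N : ℝ)) * (σ ⟨0, hr⟩ ^ 2 * Q ^ (((D : ℝ) - 1) / (D : ℝ))
        + ((D : ℝ) - 1) * (∑ i, dc i ^ 2) * Q ^ (-(1 : ℝ) / (D : ℝ))) :=
  deep_sharpness_at_balanced_minimizer_general N dd r D hN hr hD X σ e w dc y hσpos hσdec he hw hX
    hy L hL Q hQ hQpos θs hzero hbal
end

section
/- Consider the depth-D minimalist model (D ≥ 2) trained on a dataset (X, y) with dataset difficulty Q > 0, and let θ* = (u*, v₁*, …, v_{D−1}*) be a balanced global minimizer of L with L(θ*) = 0. Then (v₁*)² = … = (v_{D−1}*)² = Q^{1/D}, and (o_i*)² = (d_i²/σ_i²)·Q^{(1−D)/D} for every i ∈ {1,…,r}, where o_i* = w_iᵀu*. -/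
open scoped BigOperators

/-- **Characterization of balanced global minimizers of the depth-`D` minimalist model:**
`(v_j*)² = Q^{1/D}` for every layer `j`, and `(o_i*)² = (d_i²/σ_i²)·Q^{(1−D)/D}`. -/
theorem deep_balanced_minimizer_characterization
    (N dd r D : ℕ) (hN : 0 < N) (hr : 0 < r) (hD : 2 ≤ D)
    (X : Matrix (Fin N) (Fin dd) ℝ)
    (σ : Fin r → ℝ) (e : Fin r → Fin N → ℝ) (w : Fin r → Fin dd → ℝ)
    (dc : Fin r → ℝ) (y : Fin N → ℝ)
    (hσpos : ∀ i, 0 < σ i)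
    (hσdec : ∀ i j : Fin r, i ≤ j → σ j ≤ σ i)
    (he : ∀ i j : Fin r, ∑ n, e i n * e j n = if i = j then (1 : ℝ) else 0)
    (hw : ∀ i j : Fin r, ∑ m, w i m * w j m = if i = j then (1 : ℝ) else 0)
    (hX : ∀ n m, X n m = ∑ i, σ i * e i n * w i m)
    (hrank : X.rank = r)
    (hy : ∀ n, y n = ∑ i, dc i * e i n)
    (L : (Fin dd → ℝ) → (Fin (D - 1) → ℝ) → ℝ)
    (hL : ∀ u v, L u v = (1 / (2 * (N : ℝ))) *
      ∑ n, ((∑ m, X n m * u m) * (∏ j, v j) - y n) ^ 2)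
    (Q : ℝ) (hQ : Q = ∑ i, dc i ^ 2 / σ i ^ 2) (hQpos : 0 < Q)
    (us : Fin dd → ℝ) (vs : Fin (D - 1) → ℝ)
    (hmin : ∀ u v, L us vs ≤ L u v) (hzero : L us vs = 0)
    (hbal : ∀ j : Fin (D - 1),
      Real.sqrt (∑ i, (∑ m, w i m * us m) ^ 2) = |vs j|) :
    (∀ j : Fin (D - 1), vs j ^ 2 = Q ^ ((1 : ℝ) / (D : ℝ))) ∧
    (∀ i : Fin r, (∑ m, w i m * us m) ^ 2
        = (dc i ^ 2 / σ i ^ 2) * Q ^ ((1 - (D : ℝ)) / (D : ℝ))) := by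
  set o : Fin r → ℝ := fun i => ∑ m, w i m * us m with ho
  set P : ℝ := ∏ j, vs j with hP
  set s : ℝ := ∑ i, o i ^ 2 with hs
  have hs0 : 0 ≤ s := Finset.sum_nonneg fun i _ => sq_nonneg _
  -- residuals vanish
  have hres : ∀ n, (∑ m, X n m * us m) * P - y n = 0 := by
    have h := hzero
    rw [hL] at h
    have hc : (0:ℝ) < 1 / (2 * (N : ℝ)) := by positivity
    have hsum : ∑ n, ((∑ m, X n m * us m) * P - y n) ^ 2 = 0 := by
      rcases mul_eq_zero.1 h with h' | h'
      · exact absurd h' (ne_of_gt hc)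
      · exact h'
    intro n
    have := (Finset.sum_eq_zero_iff_of_nonneg
      (fun i _ => sq_nonneg ((∑ m, X i m * us m) * P - y i))).1 hsum n (Finset.mem_univ n)
    exact pow_eq_zero_iff (by norm_num) |>.1 this
  -- projections
  have h1 : ∀ i : Fin r, ∑ n, (∑ m, X n m * us m) * e i n = σ i * o i := by
    intro i
    have : ∀ n, (∑ m, X n m * us m) * e i n
        = ∑ k, σ k * (e k n * e i n) * (∑ m, w k m * us m) := by
      intro n
      simp only [hX, Finset.sum_mul, Finset.mul_sum]
      rw [Finset.sum_comm]
      apply Finset.sum_congr rfl; intro k _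
      apply Finset.sum_congr rfl; intro m _
      ring
    rw [Finset.sum_congr rfl fun n _ => this n, Finset.sum_comm]
    have : ∀ k : Fin r, ∑ n, σ k * (e k n * e i n) * (∑ m, w k m * us m)
        = σ k * (if k = i then (1:ℝ) else 0) * o k := by
      intro k
      rw [← Finset.sum_mul, ← Finset.mul_sum, he k i]
    rw [Finset.sum_congr rfl fun k _ => this k]
    simp
  have h2 : ∀ i : Fin r, ∑ n, y n * e i n = dc i := by
    intro i
    have : ∀ n, y n * e i n = ∑ k, dc k * (e k n * e i n) := by
      intro n
      rw [hy, Finset.sum_mul]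
      apply Finset.sum_congr rfl; intro k _; ring
    rw [Finset.sum_congr rfl fun n _ => this n, Finset.sum_comm]
    have : ∀ k : Fin r, ∑ n, dc k * (e k n * e i n)
        = dc k * (if k = i then (1:ℝ) else 0) := by
      intro k; rw [← Finset.mul_sum, he k i]
    rw [Finset.sum_congr rfl fun k _ => this k]
    simp
  have hσo : ∀ i : Fin r, σ i * o i * P = dc i := by
    intro i
    have : ∑ n, ((∑ m, X n m * us m) * P) * e i n = ∑ n, y n * e i n := by
      apply Finset.sum_congr rfl; intro n _
      have := hres n
      have : (∑ m, X n m * us m) * P = y n := by linarith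
      rw [this]
    calc σ i * o i * P = (∑ n, (∑ m, X n m * us m) * e i n) * P := by rw [h1]
      _ = ∑ n, ((∑ m, X n m * us m) * P) * e i n := by
          rw [Finset.sum_mul]; apply Finset.sum_congr rfl; intro n _; ring
      _ = ∑ n, y n * e i n := this
      _ = dc i := h2 i
  -- balancedness: every vs j ^ 2 = s
  have hvs : ∀ j, vs j ^ 2 = s := by
    intro j
    have := hbal j
    have h' : Real.sqrt s ^ 2 = |vs j| ^ 2 := by rw [this]
    rwa [Real.sq_sqrt hs0, sq_abs, eq_comm] at h'
  -- product squared
  have hD1 : (D - 1) + 1 = D := by omega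
  have hP2 : P ^ 2 = s ^ (D - 1) := by
    rw [hP, ← Finset.prod_pow]
    rw [Finset.prod_congr rfl fun j _ => hvs j]
    simp
  -- Q = s ^ D
  have hQs : Q = s ^ D := by
    have : ∀ i : Fin r, dc i ^ 2 / σ i ^ 2 = o i ^ 2 * P ^ 2 := by
      intro i
      have hσne : σ i ≠ 0 := ne_of_gt (hσpos i)
      rw [← hσo i]
      field_simp
    rw [hQ, Finset.sum_congr rfl fun i _ => this i, ← Finset.sum_mul, ← hs, hP2,
      ← pow_succ', hD1]
  have hspos : 0 < s := by
    rcases hs0.lt_or_eq with h | h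
    · exact h
    · exfalso
      rw [hQs, ← h, zero_pow (by omega)] at hQpos
      exact lt_irrefl 0 hQpos
  have hDne : (D : ℝ) ≠ 0 := by positivity
  have hQrpow : Q ^ ((1:ℝ) / (D:ℝ)) = s := by
    rw [hQs, ← Real.rpow_natCast s D, ← Real.rpow_mul hs0]
    rw [mul_one_div, div_self hDne, Real.rpow_one]
  have hQrpow2 : Q ^ ((1 - (D:ℝ)) / (D:ℝ)) = s ^ ((1:ℝ) - (D:ℝ)) := by
    rw [hQs, ← Real.rpow_natCast s D, ← Real.rpow_mul hs0]
    congr 1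
    field_simp
  constructor
  · intro j; rw [hvs j, hQrpow]
  · intro i
    have hσne : σ i ≠ 0 := ne_of_gt (hσpos i)
    have hkey : dc i ^ 2 = σ i ^ 2 * o i ^ 2 * P ^ 2 := by
      rw [← hσo i]; ring
    rw [hQrpow2, hkey]
    have hsD1 : (s : ℝ) ^ (D - 1) = s ^ (((D : ℝ)) - 1) := by
      rw [← Real.rpow_natCast s (D - 1)]
      congr 1
      push_cast [Nat.cast_sub (by omega : 1 ≤ D)]
      ring
    have hcancel : s ^ (((D:ℝ)) - 1) * s ^ ((1:ℝ) - (D:ℝ)) = 1 := by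
      rw [← Real.rpow_add hspos]
      norm_num
    have : σ i ^ 2 * o i ^ 2 * P ^ 2 / σ i ^ 2 * s ^ ((1:ℝ) - (D:ℝ))
        = o i ^ 2 * (s ^ (((D:ℝ)) - 1) * s ^ ((1:ℝ) - (D:ℝ))) := by
      rw [← hsD1, ← hP2]
      field_simp
    rw [this, hcancel, mul_one]
end

section
/- For the two-layer minimalist model, let θ = (u, v₁) be any parameter and let θ⁺_GD = (u − (η/N)Xᵀz(θ)v₁, v₁ − (η/N)z(θ)ᵀXu) be the parameter after one gradient descent step with step size η > 0. Then the layer imbalance changes by exactly C(θ⁺_GD) − C(θ) = (η²/N²)·[−Ψ₁(θ)·C(θ) + Ω₁(θ)], where Ψ₁(θ) = Σ_{i=1}^r σ_i²(z(θ)ᵀe_i)² and Ω₁(θ) = Σ_{1≤i<j≤r} [σ_i(z(θ)ᵀe_i)o_j − σ_j(z(θ)ᵀe_j)o_i]². -/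
open scoped BigOperators

lemma lagrange_id (r : ℕ) (A o : Fin r → ℝ) :
    (∑ i, ∑ j, if i < j then (A i * o j - A j * o i) ^ 2 else 0)
      = (∑ i, A i ^ 2) * (∑ i, o i ^ 2) - (∑ i, A i * o i) ^ 2 := by
  set f : Fin r → Fin r → ℝ := fun i j => (A i * o j - A j * o i) ^ 2 with hf
  have hsymm : ∀ i j, f i j = f j i := by intro i j; simp only [hf]; ring
  have hdiag : ∀ i, f i i = 0 := by intro i; simp only [hf]; ring
  have hsplit : ∀ i j, f i j = (if i < j then f i j else 0)
      + (if j < i then f i j else 0) + (if i = j then f i j else 0) := by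
    intro i j
    rcases lt_trichotomy i j with h | h | h
    · simp [h, h.ne, h.ne', not_lt.mpr h.le]
    · simp [h, lt_irrefl]
    · simp [h, h.ne, h.ne', not_lt.mpr h.le]
  have full : (∑ i, ∑ j, f i j)
      = 2 * ((∑ i, A i ^ 2) * (∑ i, o i ^ 2) - (∑ i, A i * o i) ^ 2) := by
    have inner : ∀ i, ∑ j, f i j
        = A i ^ 2 * (∑ j, o j ^ 2) + (∑ j, A j ^ 2) * o i ^ 2
          - 2 * ((A i * o i) * (∑ j, A j * o j)) := by
      intro i
      have step : ∑ j, f i j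
          = ∑ j, (A i ^ 2 * o j ^ 2 + A j ^ 2 * o i ^ 2
              - (2 * (A i * o i)) * (A j * o j)) := by
        apply Finset.sum_congr rfl; intro j _
        simp only [hf]; ring
      rw [step, Finset.sum_sub_distrib, Finset.sum_add_distrib, ← Finset.mul_sum,
        ← Finset.sum_mul, ← Finset.mul_sum]
      ring
    have step2 : ∑ i, ∑ j, f i j
        = ∑ i, ((∑ j, o j ^ 2) * A i ^ 2 + (∑ j, A j ^ 2) * o i ^ 2
            - (2 * (∑ j, A j * o j)) * (A i * o i)) := by
      apply Finset.sum_congr rfl; intro i _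
      rw [inner i]; ring
    rw [step2, Finset.sum_sub_distrib, Finset.sum_add_distrib, ← Finset.mul_sum,
      ← Finset.mul_sum, ← Finset.mul_sum]
    ring
  have h2 : (∑ i, ∑ j, f i j)
      = 2 * (∑ i, ∑ j, if i < j then f i j else 0) := by
    have := Finset.sum_congr rfl (fun i (_ : i ∈ Finset.univ) =>
      Finset.sum_congr rfl (fun j (_ : j ∈ Finset.univ) => hsplit i j))
    rw [this]
    simp_rw [Finset.sum_add_distrib]
    have hd : (∑ i, ∑ j, if i = j then f i j else 0) = 0 := by
      simp [Finset.sum_ite_eq, hdiag]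
    have hswap : (∑ i, ∑ j, if j < i then f i j else 0)
        = ∑ i, ∑ j, if i < j then f i j else 0 := by
      rw [Finset.sum_comm]
      apply Finset.sum_congr rfl; intro i _
      apply Finset.sum_congr rfl; intro j _
      rw [hsymm]
    rw [hd, hswap]; ring
  have := full.symm.trans h2
  linarith [this]

/-- **Exact change of layer imbalance after one gradient descent step (two-layer case):**
`C(θ⁺_GD) − C(θ) = (η²/N²)·[−Ψ₁(θ)·C(θ) + Ω₁(θ)]`. -/
theorem two_layer_GD_imbalance_change
    (N dd r : ℕ) (hN : 0 < N) (hr : 0 < r)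
    (X : Matrix (Fin N) (Fin dd) ℝ)
    (σ : Fin r → ℝ) (e : Fin r → Fin N → ℝ) (w : Fin r → Fin dd → ℝ)
    (dc : Fin r → ℝ) (y : Fin N → ℝ)
    (hσpos : ∀ i, 0 < σ i)
    (hσdec : ∀ i j : Fin r, i ≤ j → σ j ≤ σ i)
    (he : ∀ i j : Fin r, ∑ n, e i n * e j n = if i = j then (1 : ℝ) else 0)
    (hw : ∀ i j : Fin r, ∑ m, w i m * w j m = if i = j then (1 : ℝ) else 0)
    (hX : ∀ n m, X n m = ∑ i, σ i * e i n * w i m)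
    (hrank : X.rank = r)
    (hy : ∀ n, y n = ∑ i, dc i * e i n)
    (η : ℝ) (hη : 0 < η)
    (u : Fin dd → ℝ) (v : ℝ)
    (z : Fin N → ℝ) (hz : ∀ n, z n = (∑ m, X n m * u m) * v - y n)
    (o : Fin r → ℝ) (ho : ∀ i, o i = ∑ m, w i m * u m)
    (Cθ : ℝ) (hCθ : Cθ = (∑ i, o i ^ 2) - v ^ 2)
    (Ψ₁ : ℝ) (hΨ₁ : Ψ₁ = ∑ i, σ i ^ 2 * (∑ n, z n * e i n) ^ 2)
    (Ω₁ : ℝ) (hΩ₁ : Ω₁ = ∑ i, ∑ j, if i < j then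
      (σ i * (∑ n, z n * e i n) * o j - σ j * (∑ n, z n * e j n) * o i) ^ 2 else 0)
    (uGD : Fin dd → ℝ)
    (huGD : ∀ m, uGD m = u m - (η / (N : ℝ)) * (∑ n, X n m * z n) * v)
    (vGD : ℝ)
    (hvGD : vGD = v - (η / (N : ℝ)) * ∑ n, z n * (∑ m, X n m * u m)) :
    ((∑ i, (∑ m, w i m * uGD m) ^ 2) - vGD ^ 2) - Cθ
      = (η ^ 2 / (N : ℝ) ^ 2) * (-(Ψ₁ * Cθ) + Ω₁) := by
  set c : ℝ := η / (N : ℝ) with hc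
  set A : Fin r → ℝ := fun i => σ i * (∑ n, z n * e i n) with hA
  -- basic facts
  have hXw : ∀ (i : Fin r) (n : Fin N), ∑ m, X n m * w i m = σ i * e i n := by
    intro i n
    have step : ∀ m, X n m * w i m = ∑ k, σ k * e k n * (w k m * w i m) := by
      intro m; rw [hX, Finset.sum_mul]
      apply Finset.sum_congr rfl; intro k _; ring
    simp_rw [step]
    rw [Finset.sum_comm]
    have step2 : ∀ k : Fin r, ∑ m, σ k * e k n * (w k m * w i m)
        = σ k * e k n * (if k = i then (1:ℝ) else 0) := by
      intro k; rw [← Finset.mul_sum, hw]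
    simp_rw [step2, mul_ite, mul_one, mul_zero]
    simp [Finset.sum_ite_eq']
  have hXu : ∀ n, ∑ m, X n m * u m = ∑ k, σ k * e k n * o k := by
    intro n
    have step : ∀ m, X n m * u m = ∑ k, σ k * e k n * (w k m * u m) := by
      intro m; rw [hX, Finset.sum_mul]
      apply Finset.sum_congr rfl; intro k _; ring
    simp_rw [step]
    rw [Finset.sum_comm]
    apply Finset.sum_congr rfl; intro k _
    rw [← Finset.mul_sum, ← ho]
  -- new u projections
  have hwuGD : ∀ i : Fin r, ∑ m, w i m * uGD m = o i - c * A i * v := by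
    intro i
    have h1 : ∑ m, w i m * (∑ n, X n m * z n) = A i := by
      have step : ∀ m, w i m * (∑ n, X n m * z n) = ∑ n, (X n m * w i m) * z n := by
        intro m; rw [Finset.mul_sum]
        apply Finset.sum_congr rfl; intro n _; ring
      simp_rw [step]
      rw [Finset.sum_comm]
      have step2 : ∀ n, ∑ m, (X n m * w i m) * z n = σ i * (z n * e i n) := by
        intro n; rw [← Finset.sum_mul, hXw]; ring
      simp_rw [step2]
      rw [← Finset.mul_sum]
    have step : ∀ m, w i m * uGD m = w i m * u m - (c * v) * (w i m * (∑ n, X n m * z n)) := by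
      intro m; rw [huGD]; ring
    simp_rw [step]
    rw [Finset.sum_sub_distrib, ← Finset.mul_sum, h1, ← ho]
    ring
  -- new v
  have hvGD' : vGD = v - c * ∑ k, A k * o k := by
    rw [hvGD]
    congr 1
    congr 1
    have step : ∀ n, z n * (∑ m, X n m * u m) = ∑ k, (σ k * o k) * (z n * e k n) := by
      intro n; rw [hXu, Finset.mul_sum]
      apply Finset.sum_congr rfl; intro k _; ring
    simp_rw [step]
    rw [Finset.sum_comm]
    apply Finset.sum_congr rfl; intro k _
    rw [← Finset.mul_sum, hA]; ring
  -- rewrite Ψ₁ and Ω₁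
  have hΨ : Ψ₁ = ∑ i, A i ^ 2 := by
    rw [hΨ₁]; apply Finset.sum_congr rfl; intro i _; rw [hA]; ring
  have hΩ : Ω₁ = (∑ i, A i ^ 2) * (∑ i, o i ^ 2) - (∑ i, A i * o i) ^ 2 := by
    rw [hΩ₁, ← lagrange_id r A o]
  -- expand the new imbalance
  have hexp : ∑ i, (∑ m, w i m * uGD m) ^ 2
      = ∑ i, o i ^ 2 - (2 * c * v) * (∑ i, A i * o i)
        + (c ^ 2 * v ^ 2) * (∑ i, A i ^ 2) := by
    have step : ∀ i : Fin r, (∑ m, w i m * uGD m) ^ 2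
        = o i ^ 2 - (2 * c * v) * (A i * o i) + (c ^ 2 * v ^ 2) * A i ^ 2 := by
      intro i; rw [hwuGD i]; ring
    simp_rw [step]
    rw [Finset.sum_add_distrib, Finset.sum_sub_distrib, ← Finset.mul_sum, ← Finset.mul_sum]
  have hc2 : c ^ 2 = η ^ 2 / (N : ℝ) ^ 2 := by rw [hc, div_pow]
  rw [hexp, hvGD', hCθ, hΨ, hΩ, ← hc2]
  ring
end
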